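/- arXiv:2603.15022 — 2 statements merged into one kernel-verified Lean document; each statement's English description precedes it below -/
import Mathlib

section
/- Let n ≥ 2 be an integer and let w : (0,∞) → ℝ be measurable with I₀ := ∫₀^∞ s^{n−2} |w(s)| ds < ∞. Then for every ε > 0 and every x ∈ ℝⁿ with x ≠ 0, one has ∫_ε^∞ [ c_{1,n} (|x|/t)^{2−n} ∫₀^{|x|/t} s^{n−2} |w(s)| ((|x|/t)² − s²)^{−1/2} ds ] t^{−(n+1)} dt ≤ c_{1,n} I₀ · ε^{−1} |x|^{1−n}. -/
open MeasureTheory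

/-- `sphereVol m` is the surface area `σ_{m-1} = 2 π^{m/2} / Γ(m/2)` of the unit
sphere in `ℝ^m`. -/
noncomputable def sphereVol (m : ℕ) : ℝ := 2 * Real.pi ^ ((m : ℝ) / 2) / Real.Gamma ((m : ℝ) / 2)

/-- The constant `c_{1,n} = σ_0 σ_{n-2} / σ_{n-1}` (with `σ_0 = 2`). -/
noncomputable def radonConst (k n : ℕ) : ℝ := sphereVol k * sphereVol (n - k) / sphereVol n

/-!
With `A = |x|`, the factor `(A/t)^{2-n} t^{-n-1}` equals `A^{2-n} t^{-3}`. After bounding the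
inner integral by the integral of the absolute value, Tonelli on the region
`{ε < t, 0 < s, t s < A}` reduces everything to the `t`-integral
`∫_ε^{A/s} t^{-3} ((A/t)² - s²)^{-1/2} dt`. Its antiderivative is `-A^{-2} √((A/t)² - s²)`, which
vanishes at `t = A/s`, so the integral is `A^{-2} √((A/ε)² - s²) ≤ (A ε)⁻¹`; integrating in `s`
gives the bound.
-/

open Set
open scoped ENNReal

lemma sphereVol_nonneg (m : ℕ) : 0 ≤ sphereVol m := by
  unfold sphereVol
  apply div_nonneg (by positivity)
  exact Real.Gamma_nonneg_of_nonneg (by positivity)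

lemma radonConst_nonneg (k n : ℕ) : 0 ≤ radonConst k n :=
  div_nonneg (mul_nonneg (sphereVol_nonneg _) (sphereVol_nonneg _)) (sphereVol_nonneg _)

lemma setLIntegral_enorm_eq_ofReal_setIntegral {α : Type*} [MeasurableSpace α] {μ : Measure α}
    {s : Set α} {f : α → ℝ} (hs : MeasurableSet s) (hf : IntegrableOn f s μ)
    (h0 : ∀ x ∈ s, 0 ≤ f x) :
    ∫⁻ x in s, ‖f x‖ₑ ∂μ = ENNReal.ofReal (∫ x in s, f x ∂μ) := by
  have h0' : 0 ≤ᵐ[μ.restrict s] f := (ae_restrict_iff' hs).mpr (ae_of_all _ h0)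
  rw [lintegral_enorm_of_ae_nonneg h0', ofReal_integral_eq_lintegral_ofReal hf h0']

lemma div_rpow_two_sub_mul_rpow_neg_sub_one {A t : ℝ} (hA : 0 ≤ A) (ht : 0 < t) (p : ℝ) :
    (A / t) ^ (2 - p) * t ^ (-p - 1) = A ^ (2 - p) / t ^ 3 := by
  rw [Real.div_rpow hA ht.le, div_mul_eq_mul_div, mul_div_assoc, ← Real.rpow_sub ht,
    show -p - 1 - (2 - p) = -(3 : ℕ) by push_cast; ring, Real.rpow_neg ht.le, Real.rpow_natCast,
    div_eq_mul_inv]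

lemma ofReal_mul_setIntegral_Ioo_le {c A t : ℝ} (hc : 0 ≤ c) (hA : 0 ≤ A) (ht : 0 < t)
    (p : ℝ) (f : ℝ → ℝ) :
    ENNReal.ofReal (c * (A / t) ^ (2 - p) *
        (∫ s in Ioo 0 (A / t), f s * ((A / t) ^ 2 - s ^ 2) ^ (-(1 / 2) : ℝ)) * t ^ (-p - 1))
      ≤ ENNReal.ofReal (c * A ^ (2 - p)) *
        ∫⁻ s in Ioo 0 (A / t), ‖f s‖ₑ * ‖((A / t) ^ 2 - s ^ 2) ^ (-(1 / 2) : ℝ) / t ^ 3‖ₑ := by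
  have hfactor : c * (A / t) ^ (2 - p) *
        (∫ s in Ioo 0 (A / t), f s * ((A / t) ^ 2 - s ^ 2) ^ (-(1 / 2) : ℝ)) * t ^ (-p - 1)
      = c * A ^ (2 - p) *
        ∫ s in Ioo 0 (A / t), f s * (((A / t) ^ 2 - s ^ 2) ^ (-(1 / 2) : ℝ) / t ^ 3) := by
    simp_rw [← mul_div_assoc, integral_div]
    rw [mul_right_comm _ _ (t ^ _), mul_assoc c, div_rpow_two_sub_mul_rpow_neg_sub_one hA ht]
    ring
  rw [hfactor, ENNReal.ofReal_mul (by positivity)]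
  gcongr
  simp_rw [← enorm_mul]
  exact (Real.ofReal_le_enorm _).trans (enorm_integral_le_lintegral_enorm _)

lemma hasDerivAt_neg_sqrt_inv_sq_sub {A s t : ℝ} (hA : A ≠ 0) (ht : t ≠ 0)
    (h : 0 < (A / t) ^ 2 - s ^ 2) :
    HasDerivAt (fun t => -√((A / t) ^ 2 - s ^ 2) / A ^ 2)
      (((A / t) ^ 2 - s ^ 2) ^ (-(1 / 2) : ℝ) / t ^ 3) t := by
  have hu : HasDerivAt (fun t => (A / t) ^ 2 - s ^ 2) (-2 * A ^ 2 / t ^ 3) t := by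
    have h1 : HasDerivAt (fun t => A / t) (-A / t ^ 2) t := by
      simpa [div_eq_mul_inv, neg_div] using (hasDerivAt_inv ht).const_mul A
    refine ((h1.pow 2).sub_const (s ^ 2)).congr_deriv ?_
    norm_num; field_simp
  refine ((hu.sqrt h.ne').neg.div_const (A ^ 2)).congr_deriv ?_
  rw [Real.rpow_neg h.le, ← Real.sqrt_eq_rpow]
  have := Real.sqrt_pos.mpr h
  field_simp

lemma lintegral_Ioo_enorm_rpow_neg_half_div_cube_le {A s ε : ℝ} (hA : 0 < A) (hs : 0 < s)
    (hε : 0 < ε) :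
    ∫⁻ t in Ioo ε (A / s), ‖((A / t) ^ 2 - s ^ 2) ^ (-(1 / 2) : ℝ) / t ^ 3‖ₑ
      ≤ ENNReal.ofReal ((A * ε)⁻¹) := by
  set g : ℝ → ℝ := fun t => ((A / t) ^ 2 - s ^ 2) ^ (-(1 / 2) : ℝ) / t ^ 3
  set F : ℝ → ℝ := fun t => -√((A / t) ^ 2 - s ^ 2) / A ^ 2
  rcases lt_or_ge ε (A / s) with hb | hb
  swap
  · simp [Ioo_eq_empty_of_le hb]
  have hpos : ∀ t ∈ Ioo ε (A / s), 0 < (A / t) ^ 2 - s ^ 2 := fun t ht => by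
    have ht0 : 0 < t := hε.trans ht.1
    have : s < A / t := by rw [lt_div_iff₀ ht0, mul_comm]; exact (lt_div_iff₀ hs).mp ht.2
    nlinarith
  have hg : ∀ t ∈ Ioo ε (A / s), 0 ≤ g t := fun t ht =>
    div_nonneg (Real.rpow_nonneg (hpos t ht).le _) (pow_pos (hε.trans ht.1) 3).le
  have hF : ∀ t ∈ Ioo ε (A / s), HasDerivAt F (g t) t := fun t ht =>
    hasDerivAt_neg_sqrt_inv_sq_sub hA.ne' (hε.trans ht.1).ne' (hpos t ht)
  have hFc : ContinuousOn F (Icc ε (A / s)) := by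
    have : ∀ t ∈ Icc ε (A / s), t ≠ 0 := fun t ht => (hε.trans_le ht.1).ne'
    fun_prop (disch := assumption)
  have hgi : IntegrableOn g (Ioc ε (A / s)) :=
    intervalIntegral.integrableOn_deriv_of_nonneg hFc hF hg
  have hFb : F (A / s) = 0 := by simp [F, div_div_cancel₀ hA.ne']
  calc ∫⁻ t in Ioo ε (A / s), ‖g t‖ₑ = ENNReal.ofReal (F (A / s) - F ε) := by
        rw [setLIntegral_enorm_eq_ofReal_setIntegral measurableSet_Ioo
          (hgi.mono_set Ioo_subset_Ioc_self) hg, setIntegral_congr_set Ioo_ae_eq_Ioc,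
          ← intervalIntegral.integral_of_le hb.le,
          intervalIntegral.integral_eq_sub_of_hasDerivAt_of_le hb.le hFc hF
            ((intervalIntegrable_iff_integrableOn_Ioc_of_le hb.le).mpr hgi)]
    _ ≤ ENNReal.ofReal ((A * ε)⁻¹) := by
        refine ENNReal.ofReal_le_ofReal ?_
        have hsq : √((A / ε) ^ 2 - s ^ 2) ≤ A / ε :=
          Real.sqrt_le_iff.mpr ⟨by positivity, by nlinarith⟩
        calc F (A / s) - F ε = √((A / ε) ^ 2 - s ^ 2) / A ^ 2 := by
              rw [hFb]; simp only [F]; ring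
          _ ≤ A / ε / A ^ 2 := by gcongr
          _ = (A * ε)⁻¹ := by field_simp

section HyperbolicRegion

def hyperbolicRegion (ε A : ℝ) : Set (ℝ × ℝ) := {p | ε < p.1 ∧ 0 < p.2 ∧ p.1 * p.2 < A}

lemma measurableSet_hyperbolicRegion (ε A : ℝ) : MeasurableSet (hyperbolicRegion ε A) :=
  (measurableSet_lt measurable_const measurable_fst).inter
    ((measurableSet_lt measurable_const measurable_snd).inter
      (measurableSet_lt (measurable_fst.mul measurable_snd) measurable_const))

variable {ε A : ℝ} {F : ℝ → ℝ → ℝ≥0∞}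

lemma lintegral_indicator_hyperbolicRegion_left (hε : 0 ≤ ε) (t : ℝ) :
    ∫⁻ s, (hyperbolicRegion ε A).indicator (Function.uncurry F) (t, s)
      = (Ioi ε).indicator (fun t => ∫⁻ s in Ioo 0 (A / t), F t s) t := by
  by_cases ht : ε < t
  · rw [indicator_of_mem (mem_Ioi.mpr ht), ← lintegral_indicator measurableSet_Ioo]
    congr with s
    simp [hyperbolicRegion, indicator_apply, ht, lt_div_iff₀ (hε.trans_lt ht), mul_comm s t]
  · simp [hyperbolicRegion, ht]

lemma lintegral_indicator_hyperbolicRegion_right (s : ℝ) :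
    ∫⁻ t, (hyperbolicRegion ε A).indicator (Function.uncurry F) (t, s)
      = (Ioi 0).indicator (fun s => ∫⁻ t in Ioo ε (A / s), F t s) s := by
  by_cases hs : 0 < s
  · rw [indicator_of_mem (mem_Ioi.mpr hs), ← lintegral_indicator measurableSet_Ioo]
    congr with t
    simp [hyperbolicRegion, indicator_apply, hs, lt_div_iff₀ hs, and_comm]
  · simp [hyperbolicRegion, hs]

lemma lintegral_Ioi_lintegral_Ioo_div_swap (hε : 0 ≤ ε) (hF : Measurable (Function.uncurry F)) :
    ∫⁻ t in Ioi ε, ∫⁻ s in Ioo 0 (A / t), F t s = ∫⁻ s in Ioi 0, ∫⁻ t in Ioo ε (A / s), F t s := by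
  rw [← lintegral_indicator measurableSet_Ioi, ← lintegral_indicator measurableSet_Ioi]
  simp_rw [← lintegral_indicator_hyperbolicRegion_left hε,
    ← lintegral_indicator_hyperbolicRegion_right]
  exact lintegral_lintegral_swap (hF.indicator (measurableSet_hyperbolicRegion ε A)).aemeasurable

end HyperbolicRegion

theorem stmt_7_general (n : ℕ) (w : ℝ → ℝ) (hw : Measurable w)
    (hI : IntegrableOn (fun s => s ^ ((n : ℝ) - 2) * |w s|) (Set.Ioi 0))
    (ε : ℝ) (hε : 0 < ε) (x : EuclideanSpace ℝ (Fin n)) (hx : x ≠ 0) :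
    (∫⁻ t in Set.Ioi ε,
        ENNReal.ofReal (radonConst 1 n * (‖x‖ / t) ^ ((2 : ℝ) - n) *
          (∫ s in Set.Ioo 0 (‖x‖ / t),
            s ^ ((n : ℝ) - 2) * |w s| * ((‖x‖ / t) ^ 2 - s ^ 2) ^ (-(1 / 2) : ℝ)) *
          t ^ (-(n : ℝ) - 1)))
      ≤ ENNReal.ofReal
          (radonConst 1 n * (∫ s in Set.Ioi 0, s ^ ((n : ℝ) - 2) * |w s|) *
            ε⁻¹ * ‖x‖ ^ ((1 : ℝ) - n)) := by
  set A := ‖x‖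
  have hA : 0 < A := norm_pos_iff.mpr hx
  set f : ℝ → ℝ := fun s => s ^ ((n : ℝ) - 2) * |w s|
  have hC : 0 ≤ radonConst 1 n * A ^ ((2 : ℝ) - n) :=
    mul_nonneg (radonConst_nonneg 1 n) (by positivity)
  have hf0 : ∀ s ∈ Ioi (0 : ℝ), 0 ≤ f s := fun s hs =>
    mul_nonneg (Real.rpow_nonneg (le_of_lt hs) _) (abs_nonneg _)
  calc _ ≤ ∫⁻ t in Ioi ε, ENNReal.ofReal (radonConst 1 n * A ^ ((2 : ℝ) - n)) *
          ∫⁻ s in Ioo 0 (A / t), ‖f s‖ₑ * ‖((A / t) ^ 2 - s ^ 2) ^ (-(1 / 2) : ℝ) / t ^ 3‖ₑ :=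
        setLIntegral_mono' measurableSet_Ioi fun t ht =>
          ofReal_mul_setIntegral_Ioo_le (radonConst_nonneg 1 n) hA.le (hε.trans ht) _ f
    _ = ENNReal.ofReal (radonConst 1 n * A ^ ((2 : ℝ) - n)) * ∫⁻ s in Ioi 0, ‖f s‖ₑ *
          ∫⁻ t in Ioo ε (A / s), ‖((A / t) ^ 2 - s ^ 2) ^ (-(1 / 2) : ℝ) / t ^ 3‖ₑ := by
        rw [lintegral_const_mul' _ _ ENNReal.ofReal_ne_top,
          lintegral_Ioi_lintegral_Ioo_div_swap hε.le (by fun_prop)]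
        simp_rw [lintegral_const_mul' _ _ enorm_ne_top]
    _ ≤ ENNReal.ofReal (radonConst 1 n * A ^ ((2 : ℝ) - n)) *
          ∫⁻ s in Ioi 0, ‖f s‖ₑ * ENNReal.ofReal ((A * ε)⁻¹) := by
        refine mul_le_mul_right (setLIntegral_mono' measurableSet_Ioi fun s hs => ?_) _
        exact mul_le_mul_right (lintegral_Ioo_enorm_rpow_neg_half_div_cube_le hA hs hε) _
    _ = _ := by
        rw [lintegral_mul_const' _ _ ENNReal.ofReal_ne_top,
          setLIntegral_enorm_eq_ofReal_setIntegral measurableSet_Ioi hI hf0,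
          ← ENNReal.ofReal_mul (setIntegral_nonneg measurableSet_Ioi hf0), ← ENNReal.ofReal_mul hC,
          show (1 : ℝ) - n = 2 - n - 1 by ring, Real.rpow_sub_one hA.ne']
        congr 1
        ring

/-- Lemma `lem:260119-81`(2) for `k = 1`:
`∫_ε^∞ [c_{1,n} (|x|/t)^{2-n} ∫₀^{|x|/t} s^{n-2}|w(s)| ((|x|/t)²-s²)^{-1/2} ds] t^{-(n+1)} dt
  ≤ c_{1,n} I₀ ε^{-1} |x|^{1-n}`. -/
theorem stmt_7 (n : ℕ) (hn : 2 ≤ n) (w : ℝ → ℝ) (hw : Measurable w)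
    (hI : IntegrableOn (fun s => s ^ ((n : ℝ) - 2) * |w s|) (Set.Ioi 0))
    (ε : ℝ) (hε : 0 < ε) (x : EuclideanSpace ℝ (Fin n)) (hx : x ≠ 0) :
    (∫⁻ t in Set.Ioi ε,
        ENNReal.ofReal (radonConst 1 n * (‖x‖ / t) ^ ((2 : ℝ) - n) *
          (∫ s in Set.Ioo 0 (‖x‖ / t),
            s ^ ((n : ℝ) - 2) * |w s| * ((‖x‖ / t) ^ 2 - s ^ 2) ^ (-(1 / 2) : ℝ)) *
          t ^ (-(n : ℝ) - 1)))
      ≤ ENNReal.ofReal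
          (radonConst 1 n * (∫ s in Set.Ioi 0, s ^ ((n : ℝ) - 2) * |w s|) *
            ε⁻¹ * ‖x‖ ^ ((1 : ℝ) - n)) :=
  stmt_7_general n w hw hI ε hε x hx
end

section
/- Let k ≥ 1 be an integer, s > 0, and g : (0,∞) → [0,∞] measurable. Then ∫_{ℝ^k} g(√(|u|² + s²)) du = σ_{k−1} ∫_s^∞ g(t) (t² − s²)^{k/2 − 1} t dt, where both sides may be +∞. (This computes the k-plane Radon transform of the radial function x ↦ g(|x|) on ℝⁿ over a k-dimensional affine plane at distance s from the origin.) -/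
open MeasureTheory

/-!
Integrating in polar coordinates turns the left side into
`σ_{k-1} ∫_0^∞ r^(k-1) g(√(r² + s²)) dr`; the sphere measure appearing there is
`k · vol(B(0,1)) = 2 π^(k/2) / Γ(k/2)`.
The substitution `t = √(r² + s²)`, for which `t dt = r dr` and `(t² - s²)^(k/2-1) = r^(k-2)`,
turns this into the right side.
-/

open Set Module

theorem lintegral_fun_norm_addHaar {E : Type*} [NormedAddCommGroup E] [NormedSpace ℝ E]
    [FiniteDimensional ℝ E] [MeasurableSpace E] [BorelSpace E] [Nontrivial E]
    (μ : Measure E) [μ.IsAddHaarMeasure] {f : ℝ → ENNReal} (hf : Measurable f) :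
    ∫⁻ x, f ‖x‖ ∂μ =
      μ.toSphere univ * ∫⁻ y in Ioi (0 : ℝ), ENNReal.ofReal (y ^ (finrank ℝ E - 1)) * f y :=
  calc ∫⁻ x, f ‖x‖ ∂μ
      = ∫⁻ x : ({0}ᶜ : Set E), f ‖x.1‖ ∂(μ.comap (↑)) := by
        rw [lintegral_subtype_comap (measurableSet_singleton 0).compl fun x ↦ f ‖x‖,
          restrict_compl_singleton]
    _ = ∫⁻ x, f x.2 ∂(μ.toSphere.prod (.volumeIoiPow (finrank ℝ E - 1))) := by
        simpa using μ.measurePreserving_homeomorphUnitSphereProd.lintegral_comp_emb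
          (Homeomorph.measurableEmbedding _) (f ∘ Subtype.val ∘ Prod.snd)
    _ = μ.toSphere univ * ∫⁻ y : Ioi (0 : ℝ), f y ∂(.volumeIoiPow (finrank ℝ E - 1)) := by
        simpa using lintegral_prod_mul (μ := μ.toSphere) (f := fun _ ↦ 1)
          (g := fun y : Ioi (0 : ℝ) ↦ f y) aemeasurable_const
          (hf.comp measurable_subtype_coe).aemeasurable
    _ = _ := by
        rw [Measure.volumeIoiPow, lintegral_withDensity_eq_lintegral_mul _
          (f := fun y : Ioi (0 : ℝ) ↦ ENNReal.ofReal (y.1 ^ (finrank ℝ E - 1)))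
          (measurable_subtype_coe.pow_const _).ennreal_ofReal
          (g := fun y : Ioi (0 : ℝ) ↦ f y) (hf.comp measurable_subtype_coe),
          ← lintegral_subtype_comap measurableSet_Ioi]
        rfl

theorem InnerProductSpace.toSphere_volume_univ {E : Type*} [NormedAddCommGroup E]
    [InnerProductSpace ℝ E] [FiniteDimensional ℝ E] [MeasurableSpace E] [BorelSpace E]
    [Nontrivial E] :
    (volume : Measure E).toSphere univ = ENNReal.ofReal (sphereVol (finrank ℝ E)) := by
  set n := finrank ℝ E
  have hn_pos : (0 : ℝ) < n := by exact_mod_cast finrank_pos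
  have hn : (0 : ℝ) < n / 2 := by positivity
  have hsqrt : √Real.pi ^ n = Real.pi ^ ((n : ℝ) / 2) := by
    rw [Real.sqrt_eq_rpow, ← Real.rpow_natCast, ← Real.rpow_mul Real.pi_pos.le]
    ring_nf
  rw [Measure.toSphere_apply_univ, InnerProductSpace.volume_ball, ENNReal.ofReal_one, one_pow,
    one_mul, ← ENNReal.ofReal_natCast, ← ENNReal.ofReal_mul n.cast_nonneg, hsqrt,
    Real.Gamma_add_one hn.ne', sphereVol]
  congr 1
  field_simp [(Real.Gamma_pos_of_pos hn).ne', hn_pos.ne']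

theorem lintegral_Ioi_mul_ofReal_eq_comp_sqrt_sq_add_sq {s : ℝ} (hs : 0 ≤ s) (F : ℝ → ENNReal) :
    ∫⁻ t in Ioi s, F t * ENNReal.ofReal t =
      ∫⁻ r in Ioi 0, F √(r ^ 2 + s ^ 2) * ENNReal.ofReal r := by
  set φ : ℝ → ℝ := fun r ↦ √(r ^ 2 + s ^ 2)
  have hφ_pos {r : ℝ} (hr : 0 < r) : 0 < φ r := by positivity
  have hφ_mono : StrictMonoOn φ (Ioi 0) := fun a ha b hb hab ↦
    Real.sqrt_lt_sqrt (by positivity) (by gcongr; exact le_of_lt ha)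
  have hφ_image : φ '' Ioi 0 = Ioi s := by
    ext t
    constructor
    · rintro ⟨r, hr, rfl⟩
      exact (Real.lt_sqrt hs).2 (by nlinarith [mem_Ioi.1 hr])
    · intro (ht : s < t)
      refine ⟨√(t ^ 2 - s ^ 2), Real.sqrt_pos.2 (by nlinarith), ?_⟩
      simp only [φ]
      rw [Real.sq_sqrt (by nlinarith), sub_add_cancel, Real.sqrt_sq (hs.trans ht.le)]
  have hφ_deriv {r : ℝ} (hr : 0 < r) : HasDerivAt φ (2 * r / (2 * φ r)) r := by
    simpa using (((hasDerivAt_pow 2 r).add_const (s ^ 2)).sqrt (by positivity))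
  rw [← hφ_image, lintegral_image_eq_lintegral_abs_deriv_mul measurableSet_Ioi
    (fun _ hr ↦ (hφ_deriv hr).hasDerivWithinAt) hφ_mono.injOn]
  refine setLIntegral_congr_fun measurableSet_Ioi fun r (hr : 0 < r) ↦ ?_
  rw [mul_left_comm, ← ENNReal.ofReal_mul (abs_nonneg _), abs_of_pos (by positivity)]
  congr 2
  field_simp [(hφ_pos hr).ne']

theorem lintegral_Ioi_mul_rpow_sq_sub_sq {k : ℕ} (hk : 1 ≤ k) {s : ℝ} (hs : 0 ≤ s)
    (g : ℝ → ENNReal) :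
    ∫⁻ t in Ioi s, g t * ENNReal.ofReal ((t ^ 2 - s ^ 2) ^ ((k : ℝ) / 2 - 1) * t) =
      ∫⁻ r in Ioi 0, ENNReal.ofReal (r ^ (k - 1)) * g √(r ^ 2 + s ^ 2) := by
  have hsplit : ∀ t ∈ Ioi s, g t * ENNReal.ofReal ((t ^ 2 - s ^ 2) ^ ((k : ℝ) / 2 - 1) * t) =
      g t * ENNReal.ofReal ((t ^ 2 - s ^ 2) ^ ((k : ℝ) / 2 - 1)) * ENNReal.ofReal t :=
    fun t (ht : s < t) ↦ by rw [ENNReal.ofReal_mul' (hs.trans ht.le), mul_assoc]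
  rw [setLIntegral_congr_fun measurableSet_Ioi hsplit,
    lintegral_Ioi_mul_ofReal_eq_comp_sqrt_sq_add_sq hs]
  refine setLIntegral_congr_fun measurableSet_Ioi fun r (hr : 0 < r) ↦ ?_
  have hpow : (r ^ 2) ^ ((k : ℝ) / 2 - 1) * r = r ^ (k - 1) := by
    rw [← Real.rpow_natCast r 2, ← Real.rpow_mul hr.le, ← Real.rpow_add_one hr.ne',
      ← Real.rpow_natCast, Nat.cast_sub hk]
    push_cast
    ring_nf
  rw [Real.sq_sqrt (by positivity), add_sub_cancel_right, ← hpow, ENNReal.ofReal_mul' hr.le]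
  ring

/-- Lemma `lem:abel-representation` (Abel representation of the k-plane Radon transform
of a radial function): for every measurable `g : (0,∞) → [0,∞]` and `s > 0`,
`∫_{ℝ^k} g(√(|u|²+s²)) du = σ_{k-1} ∫_s^∞ g(t) (t²-s²)^{k/2-1} t dt`. -/
theorem stmt_13 (k : ℕ) (hk : 1 ≤ k) (s : ℝ) (hs : 0 < s)
    (g : ℝ → ENNReal) (hg : Measurable g) :
    (∫⁻ u : EuclideanSpace ℝ (Fin k), g (Real.sqrt (‖u‖ ^ 2 + s ^ 2)))
      = ENNReal.ofReal (sphereVol k) *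
        ∫⁻ t in Set.Ioi s, g t * ENNReal.ofReal ((t ^ 2 - s ^ 2) ^ ((k : ℝ) / 2 - 1) * t) := by
  have : Nonempty (Fin k) := ⟨⟨0, hk⟩⟩
  have hf : Measurable fun r : ℝ ↦ g √(r ^ 2 + s ^ 2) := by fun_prop
  rw [lintegral_fun_norm_addHaar volume hf, InnerProductSpace.toSphere_volume_univ,
    finrank_euclideanSpace_fin, lintegral_Ioi_mul_rpow_sq_sub_sq hk hs.le]
end
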